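/- Let Sp_2^0(Z) be the subgroup of SL_2(Z) consisting of matrices φ that stabilize the quadratic refinement q_{0,0} of (Z², Ω_1) (the refinement vanishing on both standard basis vectors) under q ↦ q∘φ. Then the abelianization of Sp_2^0(Z) is isomorphic to Z ⊕ Z/4, where a generator of the Z summand is represented by [[1,2],[0,1]] and a generator of the Z/4 summand is represented by [[0,-1],[1,0]]. -/

import Mathlib

/-- The standard symplectic pairing `Ω₁` on `ℤ²`. -/
def symp2 (x y : Fin 2 → ℤ) : ℤ := x 0 * y 1 - x 1 * y 0

/-- A quadratic refinement of `(ℤ², Ω₁)`. -/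
def IsQuadRef2 (q : (Fin 2 → ℤ) → ZMod 2) : Prop :=
  ∀ x y, q (x + y) = q x + q y + ((symp2 x y : ℤ) : ZMod 2)

/-- The matrix `[[1,2],[0,1]]` in `SL₂(ℤ)`. -/
def Mmu : Matrix.SpecialLinearGroup (Fin 2) ℤ :=
  ⟨!![1, 2; 0, 1], by norm_num [Matrix.det_fin_two_of]⟩

/-- The matrix `[[0,-1],[1,0]]` in `SL₂(ℤ)`. -/
def Mlam : Matrix.SpecialLinearGroup (Fin 2) ℤ :=
  ⟨!![0, -1; 1, 0], by norm_num [Matrix.det_fin_two_of]⟩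

open Matrix Pointwise

namespace Stmt10

abbrev SL2 : Type := Matrix.SpecialLinearGroup (Fin 2) ℤ

lemma Mmu_eq : Mmu = ModularGroup.T ^ (2:ℤ) := by
  apply Subtype.ext
  rw [ModularGroup.coe_T_zpow]
  rfl

lemma Mmu_zpow (n : ℤ) : ((Mmu ^ n : SL2) : Matrix (Fin 2) (Fin 2) ℤ) = !![1, 2*n; 0, 1] := by
  rw [Mmu_eq, ← _root_.zpow_mul, ModularGroup.coe_T_zpow]

def mk2 (a b c d : ℤ) (h : a * d - b * c = 1) : SL2 :=
  ⟨!![a, b; c, d], by rw [Matrix.det_fin_two_of]; linarith⟩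

@[simp] lemma mk2_coe (a b c d : ℤ) (h) : ((mk2 a b c d h : SL2) : Matrix (Fin 2) (Fin 2) ℤ) = !![a, b; c, d] := rfl

lemma sl2_det (M : SL2) : M.1 0 0 * M.1 1 1 - M.1 0 1 * M.1 1 0 = 1 := by
  have := M.2
  rwa [Matrix.det_fin_two] at this

lemma sl2_eta (M : SL2) : (M : Matrix (Fin 2) (Fin 2) ℤ) = !![M.1 0 0, M.1 0 1; M.1 1 0, M.1 1 1] :=
  Matrix.eta_fin_two _


def HC (H : Subgroup SL2) : Prop :=
  ∀ M : SL2, M ∈ H ↔ (Even (M.1 0 0 * M.1 1 0) ∧ Even (M.1 0 1 * M.1 1 1))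

lemma mulVec0 (A : Matrix (Fin 2) (Fin 2) ℤ) (x : Fin 2 → ℤ) :
    A.mulVec x 0 = A 0 0 * x 0 + A 0 1 * x 1 := by
  simp [Matrix.mulVec, dotProduct, Fin.sum_univ_two]

lemma mulVec1 (A : Matrix (Fin 2) (Fin 2) ℤ) (x : Fin 2 → ℤ) :
    A.mulVec x 1 = A 1 0 * x 0 + A 1 1 * x 1 := by
  simp [Matrix.mulVec, dotProduct, Fin.sum_univ_two]

lemma zmod2_aux : ∀ A B C D s t : ZMod 2, A*C = 0 → B*D = 0 → A*D - B*C = 1 →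
    (A*s + B*t)*(C*s + D*t) = s*t := by decide

lemma q_eq (q : (Fin 2 → ℤ) → ZMod 2) (hq : IsQuadRef2 q)
    (he : q ![1, 0] = 0) (hf : q ![0, 1] = 0) :
    ∀ x : Fin 2 → ℤ, q x = ((x 0 * x 1 : ℤ) : ZMod 2) := by
  have q0 : q 0 = 0 := by
    have h := hq 0 0
    simpa [symp2] using h
  have hsm : ∀ (v : Fin 2 → ℤ), q v = 0 → ∀ n : ℤ, q (n • v) = 0 := by
    intro v hv n
    induction n using Int.induction_on with
    | zero => simpa using q0
    | succ n ih =>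
      have h := hq ((n:ℤ) • v) v
      have hs : symp2 ((n:ℤ) • v) v = 0 := by
        simp only [symp2, Pi.smul_apply, smul_eq_mul]
        ring
      rw [hs] at h
      rw [add_smul, one_smul, h, ih, hv]
      simp
    | pred n ih =>
      have hcomb : (-(n:ℤ) - 1) • v + v = (-(n:ℤ)) • v := by
        rw [sub_smul, one_smul, sub_add_cancel]
      have h := hq ((-(n:ℤ) - 1) • v) v
      have hs : symp2 ((-(n:ℤ) - 1) • v) v = 0 := by
        simp only [symp2, Pi.smul_apply, smul_eq_mul]
        ring
      rw [hcomb, ih, hv, hs] at h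
      simpa using h.symm
  intro x
  have hx : x 0 • ![(1:ℤ),0] + x 1 • ![(0:ℤ),1] = x := by
    funext i
    fin_cases i <;> simp
  have h1 := hq (x 0 • ![(1:ℤ),0]) (x 1 • ![(0:ℤ),1])
  rw [hx] at h1
  have hs : symp2 (x 0 • ![(1:ℤ),0]) (x 1 • ![(0:ℤ),1]) = x 0 * x 1 := by
    simp [symp2]
  rw [h1, hs, hsm _ he (x 0), hsm _ hf (x 1)]
  simp

lemma HC_of (q : (Fin 2 → ℤ) → ZMod 2) (hq : IsQuadRef2 q)
    (he : q ![1, 0] = 0) (hf : q ![0, 1] = 0)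
    (H : Subgroup SL2)
    (hH : ∀ φ : SL2,
      φ ∈ H ↔ ∀ x : Fin 2 → ℤ, q ((φ : Matrix (Fin 2) (Fin 2) ℤ).mulVec x) = q x) :
    HC H := by
  have qval := q_eq q hq he hf
  intro M
  rw [hH M]
  constructor
  · intro hMx
    constructor
    · have h1 := hMx ![1,0]
      rw [qval, qval, mulVec0, mulVec1] at h1
      have h1' : ((M.1 0 0 * M.1 1 0 : ℤ) : ZMod 2) = 0 := by
        push_cast at h1 ⊢
        simp at h1
        rcases h1 with h'|h' <;> rw [h'] <;> ring
      exact even_iff_two_dvd.mpr ((ZMod.intCast_zmod_eq_zero_iff_dvd _ 2).mp h1')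
    · have h1 := hMx ![0,1]
      rw [qval, qval, mulVec0, mulVec1] at h1
      have h1' : ((M.1 0 1 * M.1 1 1 : ℤ) : ZMod 2) = 0 := by
        push_cast at h1 ⊢
        simp at h1
        rcases h1 with h'|h' <;> rw [h'] <;> ring
      exact even_iff_two_dvd.mpr ((ZMod.intCast_zmod_eq_zero_iff_dvd _ 2).mp h1')
  · rintro ⟨h1, h2⟩ x
    rw [qval, qval, mulVec0, mulVec1]
    have e1 : ((M.1 0 0 * M.1 1 0 : ℤ) : ZMod 2) = 0 :=
      (ZMod.intCast_zmod_eq_zero_iff_dvd _ 2).mpr (even_iff_two_dvd.mp h1)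
    have e2 : ((M.1 0 1 * M.1 1 1 : ℤ) : ZMod 2) = 0 :=
      (ZMod.intCast_zmod_eq_zero_iff_dvd _ 2).mpr (even_iff_two_dvd.mp h2)
    have edet : ((M.1 0 0 * M.1 1 1 - M.1 0 1 * M.1 1 0 : ℤ) : ZMod 2) = 1 := by
      rw [sl2_det M]
      simp
    push_cast at e1 e2 edet ⊢
    exact zmod2_aux _ _ _ _ _ _ e1 e2 edet

lemma euclid (a c : ℤ) (hc : c ≠ 0) (h1 : a % 2 = 0 ∨ c % 2 = 0)
    (h2 : ¬(a % 2 = 0 ∧ c % 2 = 0)) :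
    ∃ k r : ℤ, a = 2*k*c + r ∧ r.natAbs < c.natAbs := by
  set m : ℤ := |c| with hmdef
  have hm : 0 < m := abs_pos.mpr hc
  have hmc : m = c ∨ m = -c := abs_choice c
  have hu : (0:ℤ) < 2*m := by linarith
  set q : ℤ := a / (2*m) with hq
  set r₀ : ℤ := a % (2*m) with hr0def
  have key : r₀ + 2*m*q = a := Int.emod_add_mul_ediv a (2*m)
  have hr0 : 0 ≤ r₀ := Int.emod_nonneg a (by linarith)
  have hr1 : r₀ < 2*m := Int.emod_lt_of_pos a hu
  obtain ⟨t, ht⟩ : ∃ t, 2*m*q = 2*t := ⟨m*q, by ring⟩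
  have hne : r₀ ≠ m := by omega
  have hkc : ∀ s : ℤ, ∃ k : ℤ, k * c = m * s := by
    intro s
    rcases hmc with h|h
    · exact ⟨s, by rw [h]; ring⟩
    · exact ⟨-s, by rw [h]; ring⟩
  rcases lt_or_gt_of_ne hne with hlt|hgt
  · obtain ⟨k, hk⟩ := hkc q
    refine ⟨k, r₀, by linarith [hk, key, ht], by omega⟩
  · obtain ⟨k, hk⟩ := hkc (q+1)
    refine ⟨k, r₀ - 2*m, by linarith [hk, key], by omega⟩

lemma hmu_mem {H : Subgroup SL2} (h : HC H) : Mmu ∈ H := by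
  rw [h]
  constructor
  · exact ⟨0, rfl⟩
  · exact ⟨1, rfl⟩

lemma hlam_mem {H : Subgroup SL2} (h : HC H) : Mlam ∈ H := by
  rw [h]
  constructor
  · exact ⟨0, rfl⟩
  · exact ⟨0, rfl⟩

lemma gen_aux {H : Subgroup SL2} (h : HC H) : ∀ n : ℕ, ∀ M : SL2, M ∈ H → (M.1 1 0).natAbs = n →
    M ∈ Subgroup.closure {Mlam, Mmu} := by
  intro n
  induction n using Nat.strong_induction_on with
  | _ n IH =>
    intro M hM hn
    have hdet : M.1 0 0 * M.1 1 1 - M.1 0 1 * M.1 1 0 = 1 := sl2_det M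
    set a := M.1 0 0 with ha
    set b := M.1 0 1 with hb
    set c := M.1 1 0 with hcdef
    set d := M.1 1 1 with hd
    by_cases hc : c = 0
    · have had : a * d = 1 := by rw [hc] at hdet; linarith
      have hbd : Even (b * d) := ((h M).1 hM).2
      rcases Int.mul_eq_one_iff_eq_one_or_neg_one.mp had with ⟨ha1, hd1⟩|⟨ha1, hd1⟩
      · have hbe : Even b := by
          rcases Int.even_mul.mp hbd with h'|h'
          · exact h'
          · rw [hd1] at h'; norm_num at h'
        obtain ⟨j, hj⟩ := hbe
        have : M = Mmu ^ j := by
          apply Subtype.ext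
          rw [Mmu_zpow, sl2_eta M, ← ha, ← hb, ← hcdef, ← hd, ha1, hd1, hc, hj]
          norm_num
          ring
        rw [this]
        exact Subgroup.zpow_mem _ (Subgroup.subset_closure (by simp)) j
      · have hbe : Even b := by
          rcases Int.even_mul.mp hbd with h'|h'
          · exact h'
          · rw [hd1] at h'; norm_num at h'
        obtain ⟨j, hj⟩ := hbe
        have : M = Mlam ^ 2 * Mmu ^ (-j) := by
          apply Subtype.ext
          rw [Matrix.SpecialLinearGroup.coe_mul, Mmu_zpow,
            show ((Mlam ^ 2 : SL2) : Matrix (Fin 2) (Fin 2) ℤ) = !![(-1:ℤ),0;0,-1] by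
              rw [pow_two, Matrix.SpecialLinearGroup.coe_mul]
              norm_num [Mlam, Matrix.mul_fin_two],
            sl2_eta M, ← ha, ← hb, ← hcdef, ← hd, ha1, hd1, hc, hj]
          norm_num [Matrix.mul_fin_two]
          ring
        rw [this]
        exact Subgroup.mul_mem _
          (Subgroup.pow_mem _ (Subgroup.subset_closure (by simp)) 2)
          (Subgroup.zpow_mem _ (Subgroup.subset_closure (by simp)) (-j))
    · have hac : Even (a * c) := ((h M).1 hM).1
      have h1 : a % 2 = 0 ∨ c % 2 = 0 := by
        rcases Int.even_mul.mp hac with h'|h'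
        · exact Or.inl (Int.even_iff.mp h')
        · exact Or.inr (Int.even_iff.mp h')
      have h2 : ¬(a % 2 = 0 ∧ c % 2 = 0) := by
        rintro ⟨ha2, hc2⟩
        have : Even (a * d - b * c) :=
          Even.sub ((Int.even_iff.mpr ha2).mul_right d) ((Int.even_iff.mpr hc2).mul_left b)
        rw [hdet] at this
        norm_num at this
      obtain ⟨k, r, hkr, hrc⟩ := euclid a c hc h1 h2
      have hdet' : c * (-(b - 2*k*d)) - d * (-r) = 1 := by
        have hr : r = a - 2*k*c := by linarith
        rw [hr]
        linear_combination hdet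
      set M' := mk2 c d (-r) (-(b - 2*k*d)) hdet' with hM'def
      have hfact : M = Mmu ^ k * Mlam * M' := by
        apply Subtype.ext
        rw [Matrix.SpecialLinearGroup.coe_mul, Matrix.SpecialLinearGroup.coe_mul, Mmu_zpow,
          show ((Mlam : SL2) : Matrix (Fin 2) (Fin 2) ℤ) = !![(0:ℤ),-1;1,0] from rfl, mk2_coe,
          sl2_eta M, ← ha, ← hb, ← hcdef, ← hd]
        norm_num [Matrix.mul_fin_two]
        rw [hkr]
      have hM'H : M' ∈ H := by
        have : M' = (Mmu ^ k * Mlam)⁻¹ * M := by rw [hfact]; group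
        rw [this]
        exact Subgroup.mul_mem _ (Subgroup.inv_mem _
          (Subgroup.mul_mem _ (Subgroup.zpow_mem _ (hmu_mem h) k) (hlam_mem h))) hM
      have hlt : (M'.1 1 0).natAbs < n := by
        have : M'.1 1 0 = -r := rfl
        rw [this]
        omega
      have := IH _ hlt M' hM'H rfl
      rw [hfact]
      exact Subgroup.mul_mem _
        (Subgroup.mul_mem _ (Subgroup.zpow_mem _ (Subgroup.subset_closure (by simp)) k)
          (Subgroup.subset_closure (by simp))) this

lemma mul00 (M N : SL2) : (M*N).1 0 0 = M.1 0 0 * N.1 0 0 + M.1 0 1 * N.1 1 0 := by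
  rw [Matrix.SpecialLinearGroup.coe_mul]
  simp [Matrix.mul_apply, Fin.sum_univ_two]

lemma mul10 (M N : SL2) : (M*N).1 1 0 = M.1 1 0 * N.1 0 0 + M.1 1 1 * N.1 1 0 := by
  rw [Matrix.SpecialLinearGroup.coe_mul]
  simp [Matrix.mul_apply, Fin.sum_univ_two]

lemma z4_cast (x : ℤ) : (x : ZMod 4) = ((x % 4 : ℤ) : ZMod 4) := by
  conv_lhs => rw [show x = 4*(x/4) + x % 4 from by omega]
  push_cast
  rw [show (4 : ZMod 4) = 0 by decide]
  ring

lemma odd_cast4 {x : ℤ} (h : ¬ Even x) : (x : ZMod 4) = 1 ∨ (x : ZMod 4) = 3 := by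
  rw [Int.even_iff] at h
  have h4 : x % 4 = 1 ∨ x % 4 = 3 := by omega
  rw [z4_cast]
  rcases h4 with h'|h' <;> rw [h']
  · left; decide
  · right; decide

lemma even_cast4 {x : ℤ} (h : Even x) : (x : ZMod 4) = 0 ∨ (x : ZMod 4) = 2 := by
  rw [Int.even_iff] at h
  have h4 : x % 4 = 0 ∨ x % 4 = 2 := by omega
  rw [z4_cast]
  rcases h4 with h'|h' <;> rw [h']
  · left; decide
  · right; decide

/-- The mod 4 character component. -/
def gfun (M : SL2) : ZMod 4 :=
  if Even (M.1 1 0) then (M.1 0 0 : ZMod 4) - 1 else (M.1 1 0 : ZMod 4)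

lemma type_of {M : SL2} (hac : Even (M.1 0 0 * M.1 1 0)) (hbd : Even (M.1 0 1 * M.1 1 1)) :
    (Even (M.1 0 1) ∧ Even (M.1 1 0) ∧ ¬Even (M.1 0 0) ∧ ¬Even (M.1 1 1)) ∨
    (Even (M.1 0 0) ∧ Even (M.1 1 1) ∧ ¬Even (M.1 0 1) ∧ ¬Even (M.1 1 0)) := by
  have hdet := sl2_det M
  set a := M.1 0 0
  set b := M.1 0 1
  set c := M.1 1 0
  set d := M.1 1 1
  have hdetodd : ¬ Even (a*d - b*c) := by rw [hdet]; norm_num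
  rcases Int.even_or_odd a with ha | ha
  · have hbc : ¬ Even (b*c) := fun hbc => hdetodd ((ha.mul_right d).sub hbc)
    rw [Int.even_mul] at hbc
    push_neg at hbc
    have hd : Even d := (Int.even_mul.mp hbd).resolve_left hbc.1
    exact Or.inr ⟨ha, hd, hbc.1, hbc.2⟩
  · have ha' : ¬ Even a := Int.not_even_iff_odd.mpr ha
    have hc : Even c := (Int.even_mul.mp hac).resolve_left ha'
    have had : ¬ Even (a*d) := fun h' => hdetodd (h'.sub (hc.mul_left b))
    rw [Int.even_mul] at had
    push_neg at had
    have hb : Even b := (Int.even_mul.mp hbd).resolve_right had.2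
    exact Or.inl ⟨hb, hc, ha', had.2⟩

lemma z4_EE : ∀ A A' B C' : ZMod 4, (A=1∨A=3) → (A'=1∨A'=3) → (B=0∨B=2) → (C'=0∨C'=2) →
    A*A' + B*C' - 1 = (A-1) + (A'-1) := by decide

lemma z4_EA : ∀ A B C D A' C' : ZMod 4, (A=1∨A=3) → (D=1∨D=3) → (B=0∨B=2) → (C=0∨C=2) →
    (A'=0∨A'=2) → (C'=1∨C'=3) → A*D - B*C = 1 → C*A' + D*C' = (A - 1) + C' := by decide

lemma z4_AE : ∀ C D A' C' : ZMod 4, (C=1∨C=3) → (D=0∨D=2) → (A'=1∨A'=3) → (C'=0∨C'=2) →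
    C*A' + D*C' = C + (A' - 1) := by decide

lemma z4_AA : ∀ A B C D A' C' : ZMod 4, (A=0∨A=2) → (D=0∨D=2) → (B=1∨B=3) → (C=1∨C=3) →
    (A'=0∨A'=2) → (C'=1∨C'=3) → A*D - B*C = 1 → A*A' + B*C' - 1 = C + C' := by decide

lemma gfun_mul {H : Subgroup SL2} (h : HC H) {M N : SL2} (hM : M ∈ H) (hN : N ∈ H) :
    gfun (M*N) = gfun M + gfun N := by
  obtain ⟨hac, hbd⟩ := (h M).1 hM
  obtain ⟨hac', hbd'⟩ := (h N).1 hN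
  have hdet := sl2_det M
  have hdet4 : ((M.1 0 0 : ℤ) : ZMod 4) * ((M.1 1 1 : ℤ) : ZMod 4)
      - ((M.1 0 1 : ℤ) : ZMod 4) * ((M.1 1 0 : ℤ) : ZMod 4) = 1 := by
    have : ((M.1 0 0 * M.1 1 1 - M.1 0 1 * M.1 1 0 : ℤ) : ZMod 4) = ((1:ℤ) : ZMod 4) := by
      rw [hdet]
    push_cast at this
    convert this using 2
  have h00 := mul00 M N
  have h10 := mul10 M N
  rcases type_of hac hbd with ⟨hb, hc, ha, hd⟩ | ⟨ha, hd, hb, hc⟩ <;>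
    rcases type_of hac' hbd' with ⟨hb', hc', ha', hd'⟩ | ⟨ha', hd', hb', hc'⟩
  · -- M even type, N even type
    have hcc : Even ((M*N).1 1 0) := by rw [h10]; exact (hc.mul_right _).add (hc'.mul_left _)
    rw [gfun, gfun, gfun, if_pos hcc, if_pos hc, if_pos hc', h00]
    push_cast
    exact z4_EE _ _ _ _ (odd_cast4 ha) (odd_cast4 ha') (even_cast4 hb) (even_cast4 hc')
  · -- M even, N odd
    have hcc : ¬ Even ((M*N).1 1 0) := by
      rw [h10]
      exact Int.not_even_iff_odd.mpr
        ((hc.mul_right _).add_odd ((Int.not_even_iff_odd.mp hd).mul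
          (Int.not_even_iff_odd.mp hc')))
    rw [gfun, gfun, gfun, if_neg hcc, if_pos hc, if_neg hc', h10]
    push_cast
    exact z4_EA _ _ _ _ _ _ (odd_cast4 ha) (odd_cast4 hd) (even_cast4 hb) (even_cast4 hc)
      (even_cast4 ha') (odd_cast4 hc') hdet4
  · -- M odd, N even
    have hcc : ¬ Even ((M*N).1 1 0) := by
      rw [h10]
      exact Int.not_even_iff_odd.mpr
        (((Int.not_even_iff_odd.mp hc).mul (Int.not_even_iff_odd.mp ha')).add_even
          (hd.mul_right _))
    rw [gfun, gfun, gfun, if_neg hcc, if_neg hc, if_pos hc', h10]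
    push_cast
    exact z4_AE _ _ _ _ (odd_cast4 hc) (even_cast4 hd) (odd_cast4 ha') (even_cast4 hc')
  · -- M odd, N odd
    have hcc : Even ((M*N).1 1 0) := by
      rw [h10]
      exact (ha'.mul_left _).add (hd.mul_right _)
    rw [gfun, gfun, gfun, if_pos hcc, if_neg hc, if_neg hc', h00]
    push_cast
    exact z4_AA _ _ _ _ _ _ (even_cast4 ha) (even_cast4 hd) (odd_cast4 hb) (odd_cast4 hc)
      (even_cast4 ha') (odd_cast4 hc') hdet4

lemma gen {H : Subgroup SL2} (h : HC H) {M : SL2} (hM : M ∈ H) :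
    M ∈ Subgroup.closure {Mlam, Mmu} :=
  gen_aux h _ M hM rfl

section PingPong

lemma Mlam_sq_coe : ((Mlam^2 : SL2) : Matrix (Fin 2) (Fin 2) ℤ) = !![(-1:ℤ),0;0,-1] := by
  rw [pow_two, Matrix.SpecialLinearGroup.coe_mul]
  norm_num [Mlam, Matrix.mul_fin_two]

lemma Mlam_pow4 : Mlam^4 = 1 := by
  apply Subtype.ext
  rw [show (4:ℕ) = 2*2 from rfl, pow_mul, pow_two, Matrix.SpecialLinearGroup.coe_mul,
    Mlam_sq_coe, Matrix.SpecialLinearGroup.coe_one]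
  norm_num [Matrix.mul_fin_two]
  exact Matrix.one_fin_two.symm

lemma Mlam_sq_comm (g : SL2) : Mlam^2 * g = g * Mlam^2 := by
  apply Subtype.ext
  rw [Matrix.SpecialLinearGroup.coe_mul, Matrix.SpecialLinearGroup.coe_mul, Mlam_sq_coe,
    sl2_eta g]
  norm_num [Matrix.mul_fin_two]

instance N_normal : (Subgroup.zpowers (Mlam^2)).Normal := by
  constructor
  intro x hx g
  obtain ⟨k, rfl⟩ := Subgroup.mem_zpowers_iff.mp hx
  have h0 : Commute (Mlam^2) g := Mlam_sq_comm g
  have h1 : Commute ((Mlam^2)^k) g := h0.zpow_left k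
  have hcomm : g * (Mlam^2)^k * g⁻¹ = (Mlam^2)^k := by
    rw [← h1.eq, mul_inv_cancel_right]
  rw [hcomm]
  exact Subgroup.zpow_mem _ (Subgroup.mem_zpowers _) k

abbrev KK : Type := SL2 ⧸ (Subgroup.zpowers (Mlam^2))

def π : SL2 →* KK := QuotientGroup.mk' _

/-- `ℤ²` up to sign. -/
def pmSetoid : Setoid (Fin 2 → ℤ) where
  r x y := x = y ∨ x = -y
  iseqv := by
    constructor
    · intro x; exact Or.inl rfl
    · rintro x y (rfl | rfl)
      · exact Or.inl rfl
      · right; simp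
    · rintro x y z (rfl | rfl) (rfl | rfl)
      · exact Or.inl rfl
      · right; rfl
      · right; rfl
      · left; simp

abbrev PV : Type := Quotient pmSetoid

def pvSmul (g : SL2) (x : PV) : PV :=
  Quotient.map' (fun v => (g : Matrix (Fin 2) (Fin 2) ℤ).mulVec v)
    (by
      rintro x y (rfl | rfl)
      · exact Or.inl rfl
      · right
        show (g : Matrix (Fin 2) (Fin 2) ℤ).mulVec (-y)
          = -((g : Matrix (Fin 2) (Fin 2) ℤ).mulVec y)
        rw [Matrix.mulVec_neg]) x

lemma pvSmul_mk (g : SL2) (v : Fin 2 → ℤ) :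
    pvSmul g (Quotient.mk'' v) = Quotient.mk'' ((g : Matrix (Fin 2) (Fin 2) ℤ).mulVec v) := rfl

instance : MulAction SL2 PV where
  smul := pvSmul
  one_smul := by
    intro x
    induction x using Quotient.inductionOn' with
    | h v =>
      show pvSmul 1 (Quotient.mk'' v) = Quotient.mk'' v
      rw [pvSmul_mk]
      apply Quotient.sound
      left
      rw [Matrix.SpecialLinearGroup.coe_one, Matrix.one_mulVec]
  mul_smul := by
    intro g h x
    induction x using Quotient.inductionOn' with
    | h v =>
      show pvSmul (g*h) (Quotient.mk'' v) = pvSmul g (pvSmul h (Quotient.mk'' v))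
      rw [pvSmul_mk, pvSmul_mk, pvSmul_mk]
      apply Quotient.sound
      left
      rw [Matrix.SpecialLinearGroup.coe_mul, Matrix.mulVec_mulVec]

lemma sl2_smul_mk (g : SL2) (v : Fin 2 → ℤ) :
    g • (Quotient.mk'' v : PV) = Quotient.mk'' ((g : Matrix (Fin 2) (Fin 2) ℤ).mulVec v) := rfl

lemma N_le_ker : Subgroup.zpowers (Mlam^2) ≤ (MulAction.toPermHom SL2 PV).ker := by
  rw [Subgroup.zpowers_le, MonoidHom.mem_ker]
  ext x
  induction x using Quotient.inductionOn' with
  | h v =>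
    show (Mlam^2 : SL2) • (Quotient.mk'' v : PV) = Quotient.mk'' v
    rw [sl2_smul_mk]
    apply Quotient.sound
    right
    rw [Mlam_sq_coe]
    funext i
    fin_cases i
    · show (!![(-1:ℤ),0;0,-1]).mulVec v 0 = (-v) 0
      rw [mulVec0]
      simp
    · show (!![(-1:ℤ),0;0,-1]).mulVec v 1 = (-v) 1
      rw [mulVec1]
      simp

def ρK : KK →* Equiv.Perm PV := QuotientGroup.lift _ (MulAction.toPermHom SL2 PV) N_le_ker

instance : MulAction KK PV where
  smul k x := ρK k x
  one_smul := by
    intro x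
    show ρK 1 x = x
    rw [_root_.map_one]
    rfl
  mul_smul := by
    intro g h x
    show ρK (g*h) x = ρK g (ρK h x)
    rw [_root_.map_mul]
    rfl

lemma kk_smul_mk (g : SL2) (v : Fin 2 → ℤ) :
    (π g) • (Quotient.mk'' v : PV) = Quotient.mk'' ((g : Matrix (Fin 2) (Fin 2) ℤ).mulVec v) :=
  rfl

end PingPong

section PingPong2

open Subgroup

lemma Mlam_sq_sq : (Mlam^2)^2 = 1 := by rw [← pow_mul]; exact Mlam_pow4

lemma ord2_zpow {G : Type*} [Group G] (g : G) (hg : g^2 = 1) (k : ℤ) :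
    g^k = 1 ∨ g^k = g := by
  have heven : ∀ t : ℤ, g ^ (t + t) = 1 := by
    intro t
    calc g ^ (t + t) = g^t * g^t := zpow_add g t t
    _ = (g*g)^t := ((Commute.refl g).mul_zpow t).symm
    _ = (g^2)^t := by rw [pow_two]
    _ = 1 := by rw [hg, _root_.one_zpow]
  rcases Int.even_or_odd k with ⟨t, rfl⟩ | ⟨t, rfl⟩
  · exact Or.inl (heven t)
  · right
    rw [_root_.zpow_add, _root_.zpow_one, show (2*t : ℤ) = t + t by ring, heven t, one_mul]

lemma N_mem_cases {x : SL2} (hx : x ∈ Subgroup.zpowers (Mlam^2)) : x = 1 ∨ x = Mlam^2 := by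
  obtain ⟨k, rfl⟩ := Subgroup.mem_zpowers_iff.mp hx
  exact ord2_zpow _ Mlam_sq_sq k

lemma Mmu_zpow_mem_N {n : ℤ} (h : Mmu^n ∈ Subgroup.zpowers (Mlam^2)) : n = 0 := by
  rcases N_mem_cases h with h1|h1
  · have h2 := congrArg (fun X : SL2 => (X : Matrix (Fin 2) (Fin 2) ℤ) 0 1) h1
    simp only [Mmu_zpow, Matrix.SpecialLinearGroup.coe_one] at h2
    norm_num [Matrix.one_apply] at h2
    exact h2
  · have h2 := congrArg (fun X : SL2 => (X : Matrix (Fin 2) (Fin 2) ℤ) 0 0) h1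
    simp only [Mmu_zpow, Mlam_sq_coe] at h2
    norm_num at h2

def lk : KK := π Mlam

def mku : KK := π Mmu

lemma lk_sq : lk^2 = 1 := by
  have : lk^2 = π (Mlam^2) := by rw [_root_.map_pow]; rfl
  rw [this]
  exact (QuotientGroup.eq_one_iff _).mpr (Subgroup.mem_zpowers _)

lemma lk_ne_one : lk ≠ 1 := by
  intro h
  have hm : Mlam ∈ Subgroup.zpowers (Mlam^2) := (QuotientGroup.eq_one_iff _).mp h
  rcases N_mem_cases hm with h1|h1
  · have h2 := congrArg (fun X : SL2 => (X : Matrix (Fin 2) (Fin 2) ℤ) 0 1) h1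
    norm_num [Mlam, Matrix.SpecialLinearGroup.coe_one, Matrix.one_apply] at h2
  · have h2 := congrArg (fun X : SL2 => (X : Matrix (Fin 2) (Fin 2) ℤ) 1 0) h1
    simp only [Mlam_sq_coe] at h2
    norm_num [Mlam] at h2

lemma mku_zpow_eq_one {n : ℤ} (h : mku^n = 1) : n = 0 := by
  have : π (Mmu^n) = 1 := by rw [map_zpow]; exact h
  exact Mmu_zpow_mem_N ((QuotientGroup.eq_one_iff _).mp this)

lemma mku_inj : Function.Injective fun n : ℤ => mku ^ n := by
  intro n m h
  have h1 : mku^(n - m) = 1 := by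
    rw [_root_.zpow_sub]
    simp only at h
    rw [h, mul_inv_cancel]
  have := mku_zpow_eq_one h1
  omega

def Z1 : Subgroup KK := Subgroup.zpowers lk

def Z2 : Subgroup KK := Subgroup.zpowers mku

def Gf : Bool → Subgroup KK := fun b => Bool.rec Z2 Z1 b

def fam : ∀ b, ↥(Gf b) →* KK := fun b => (Gf b).subtype

lemma Z1_cases (x : ↥Z1) : x = 1 ∨ (x : KK) = lk := by
  obtain ⟨k, hk⟩ := Subgroup.mem_zpowers_iff.mp x.2
  rcases ord2_zpow lk lk_sq k with h|h
  · left
    rw [← OneMemClass.coe_eq_one, ← hk, h]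
  · right
    rw [← hk, h]

def absLT : Set PV :=
  {x | Quotient.liftOn' x (fun v => |v 0| < |v 1|) (by
    rintro x y (rfl|rfl)
    · rfl
    · show (|(-y) 0| < |(-y) 1|) = (|y 0| < |y 1|)
      simp)}

def absGT : Set PV :=
  {x | Quotient.liftOn' x (fun v => |v 1| < |v 0|) (by
    rintro x y (rfl|rfl)
    · rfl
    · show (|(-y) 1| < |(-y) 0|) = (|y 1| < |y 0|)
      simp)}

lemma mem_absLT (v : Fin 2 → ℤ) : (Quotient.mk'' v : PV) ∈ absLT ↔ |v 0| < |v 1| := Iff.rfl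

lemma mem_absGT (v : Fin 2 → ℤ) : (Quotient.mk'' v : PV) ∈ absGT ↔ |v 1| < |v 0| := Iff.rfl

def Xset : Bool → Set PV := fun b => Bool.rec absGT absLT b

lemma hXne : ∀ b, (Xset b).Nonempty := by
  intro b
  cases b
  · exact ⟨Quotient.mk'' ![1,0], by rw [Xset, mem_absGT]; norm_num⟩
  · exact ⟨Quotient.mk'' ![0,1], by rw [Xset, mem_absLT]; norm_num⟩

lemma hXdisj : Pairwise (Function.onFun Disjoint Xset) := by
  have key : ∀ x : PV, x ∈ absLT → x ∈ absGT → False := by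
    intro x
    induction x using Quotient.inductionOn' with
    | h v =>
      rw [mem_absLT, mem_absGT]
      omega
  intro i j hij
  cases i <;> cases j
  · simp at hij
  · show Disjoint (Xset false) (Xset true)
    rw [Set.disjoint_left]
    intro x h1 h2
    exact key x h2 h1
  · show Disjoint (Xset true) (Xset false)
    rw [Set.disjoint_left]
    intro x h1 h2
    exact key x h1 h2
  · simp at hij

lemma hpp : Pairwise fun i j => ∀ h : ↥(Gf i), h ≠ 1 → (fam i) h • Xset j ⊆ Xset i := by
  intro i j hij
  cases i <;> cases j <;> try simp at hij
  · -- i = false (mku), j = true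
    intro h hne x hx
    obtain ⟨y, hy, rfl⟩ := Set.mem_smul_set.mp hx
    induction y using Quotient.inductionOn' with
    | h v =>
      obtain ⟨k, hk⟩ := Subgroup.mem_zpowers_iff.mp h.2
      have hk0 : k ≠ 0 := by
        rintro rfl
        apply hne
        rw [← OneMemClass.coe_eq_one, ← hk, zpow_zero]
      have hval : (fam false) h = π (Mmu ^ k) := by
        rw [map_zpow]
        exact hk.symm
      rw [Xset] at hy ⊢
      rw [mem_absLT] at hy
      have hsm : (fam false) h • (Quotient.mk'' v : PV)
          = Quotient.mk'' (((Mmu^k : SL2) : Matrix (Fin 2) (Fin 2) ℤ).mulVec v) := by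
        rw [hval]; exact kk_smul_mk _ v
      rw [hsm, mem_absGT, Mmu_zpow, mulVec0, mulVec1]
      norm_num
      have h1 : |2*k*v 1| ≤ |v 0 + 2*k*v 1| + |v 0| := by
        have h0 := abs_add_le (v 0 + 2*k*v 1) (-(v 0))
        rw [abs_neg] at h0
        have : v 0 + 2*k*v 1 + -(v 0) = 2*k*v 1 := by ring
        rw [this] at h0
        exact h0
      have h2 : |2*k*v 1| = 2 * |k| * |v 1| := by rw [show (2*k*v 1) = (2*k)*(v 1) by ring, abs_mul, abs_mul, abs_two]
      have h3 : 1 ≤ |k| := Int.one_le_abs (by omega)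
      have h4 : (0:ℤ) ≤ |v 1| := abs_nonneg _
      nlinarith [hy]
  · -- i = true (lk), j = false
    intro h hne x hx
    obtain ⟨y, hy, rfl⟩ := Set.mem_smul_set.mp hx
    induction y using Quotient.inductionOn' with
    | h v =>
      rcases Z1_cases h with h1|h1
      · exact absurd h1 hne
      · have hval : (fam true) h = π Mlam := h1
        rw [Xset] at hy ⊢
        rw [mem_absGT] at hy
        have hsm : (fam true) h • (Quotient.mk'' v : PV)
            = Quotient.mk'' (((Mlam : SL2) : Matrix (Fin 2) (Fin 2) ℤ).mulVec v) := by
          rw [hval]; exact kk_smul_mk _ v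
        rw [hsm, mem_absLT, show ((Mlam : SL2) : Matrix (Fin 2) (Fin 2) ℤ) = !![0,-1;1,0] from rfl,
          mulVec0, mulVec1]
        norm_num
        simpa using hy

lemma hcard : 3 ≤ Cardinal.mk Bool ∨ ∃ i, 3 ≤ Cardinal.mk (Gf i) := by
  right
  refine ⟨false, ?_⟩
  show (3:Cardinal) ≤ Cardinal.mk ↥Z2
  haveI : Infinite ↥Z2 := Infinite.of_injective
    (fun n : ℤ => (⟨mku^n, Subgroup.zpow_mem _ (Subgroup.mem_zpowers _) n⟩ : ↥Z2))
    (by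
      intro n m hmn
      exact mku_inj (congrArg Subtype.val hmn))
  have h1 : (3 : Cardinal) ≤ Cardinal.aleph0 := by
    exact_mod_cast (Cardinal.nat_lt_aleph0 3).le
  exact le_trans h1 (Cardinal.aleph0_le_mk _)

lemma pp_inj : Function.Injective (Monoid.CoprodI.lift fam) :=
  Monoid.CoprodI.lift_injective_of_ping_pong fam hcard Xset hXne hXdisj hpp

end PingPong2

section Assemble

open Monoid

noncomputable def zph : Multiplicative ℤ →* KK := zpowersHom KK mku

lemma zph_apply (n : Multiplicative ℤ) : zph n = mku ^ n.toAdd := rfl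

lemma zph_inj : Function.Injective zph := by
  intro n m h
  rw [zph_apply, zph_apply] at h
  have := mku_inj h
  exact Multiplicative.toAdd.injective this

lemma zph_range : zph.range = Z2 := by
  ext x
  constructor
  · rintro ⟨n, rfl⟩
    rw [zph_apply]
    exact Subgroup.zpow_mem _ (Subgroup.mem_zpowers _) _
  · intro hx
    obtain ⟨k, hk⟩ := Subgroup.mem_zpowers_iff.mp hx
    exact ⟨Multiplicative.ofAdd k, by rw [zph_apply]; simpa using hk⟩

noncomputable def logm : ↥Z2 →* Multiplicative ℤ :=
  ((MonoidHom.ofInjective zph_inj).symm.toMonoidHom).comp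
    (MulEquiv.subgroupCongr zph_range.symm).toMonoidHom

lemma logm_mku : logm ⟨mku, Subgroup.mem_zpowers _⟩ = Multiplicative.ofAdd 1 := by
  show (MonoidHom.ofInjective zph_inj).symm
    ((MulEquiv.subgroupCongr zph_range.symm) ⟨mku, Subgroup.mem_zpowers _⟩) = Multiplicative.ofAdd 1
  rw [MulEquiv.symm_apply_eq]
  apply Subtype.ext
  rw [MonoidHom.ofInjective_apply, zph_apply]
  rw [MulEquiv.subgroupCongr_apply]
  simp

noncomputable def famz : ∀ b, ↥(Gf b) →* Multiplicative ℤ := fun b => Bool.rec logm 1 b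

noncomputable def compz : CoprodI (fun b => ↥(Gf b)) →* Multiplicative ℤ := CoprodI.lift famz

noncomputable def RR : Subgroup KK := (CoprodI.lift fam).range

noncomputable def eC : CoprodI (fun b => ↥(Gf b)) ≃* ↥RR := MonoidHom.ofInjective pp_inj

noncomputable def fR : ↥RR →* Multiplicative ℤ := compz.comp eC.symm.toMonoidHom

def xmu : ↥(Gf false) := ⟨mku, Subgroup.mem_zpowers _⟩

def xlam : ↥(Gf true) := ⟨lk, Subgroup.mem_zpowers _⟩

lemma hmkuR : mku ∈ RR := ⟨CoprodI.of xmu, by rw [CoprodI.lift_of]; rfl⟩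

lemma hlkR : lk ∈ RR := ⟨CoprodI.of xlam, by rw [CoprodI.lift_of]; rfl⟩

lemma fR_mku : fR ⟨mku, hmkuR⟩ = Multiplicative.ofAdd 1 := by
  have h1 : eC (CoprodI.of xmu) = ⟨mku, hmkuR⟩ := by
    apply Subtype.ext
    rw [show ((eC (CoprodI.of xmu)) : KK) = (CoprodI.lift fam) (CoprodI.of xmu) from
      MonoidHom.ofInjective_apply pp_inj]
    rw [CoprodI.lift_of]
    rfl
  show compz (eC.symm ⟨mku, hmkuR⟩) = Multiplicative.ofAdd 1
  rw [← h1, MulEquiv.symm_apply_apply]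
  show (CoprodI.lift famz) (CoprodI.of xmu) = Multiplicative.ofAdd 1
  rw [CoprodI.lift_of]
  exact logm_mku

lemma fR_lk : fR ⟨lk, hlkR⟩ = 1 := by
  have h1 : eC (CoprodI.of xlam) = ⟨lk, hlkR⟩ := by
    apply Subtype.ext
    rw [show ((eC (CoprodI.of xlam)) : KK) = (CoprodI.lift fam) (CoprodI.of xlam) from
      MonoidHom.ofInjective_apply pp_inj]
    rw [CoprodI.lift_of]
    rfl
  show compz (eC.symm ⟨lk, hlkR⟩) = 1
  rw [← h1, MulEquiv.symm_apply_apply]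
  show (CoprodI.lift famz) (CoprodI.of xlam) = 1
  rw [CoprodI.lift_of]
  rfl

end Assemble

section Final

variable {H : Subgroup SL2}

lemma hR (hc : HC H) : ∀ h : ↥H, π h.1 ∈ RR := by
  intro h
  have h1 : Subgroup.closure {Mlam, Mmu} ≤ Subgroup.comap π RR := by
    rw [Subgroup.closure_le]
    intro x hx
    rcases Set.mem_insert_iff.mp hx with rfl | hx
    · exact hlkR
    · rw [Set.mem_singleton_iff.mp hx]
      exact hmkuR
  exact h1 (gen hc h.2)

noncomputable def ΦZ (hc : HC H) : ↥H →* Multiplicative ℤ :=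
  fR.comp (MonoidHom.codRestrict (π.comp H.subtype) RR (hR hc))

lemma ΦZ_mu (hc : HC H) : ΦZ hc ⟨Mmu, hmu_mem hc⟩ = Multiplicative.ofAdd 1 := by
  show fR ⟨π Mmu, _⟩ = Multiplicative.ofAdd 1
  rw [show (⟨π Mmu, hR hc ⟨Mmu, hmu_mem hc⟩⟩ : ↥RR) = ⟨mku, hmkuR⟩ from Subtype.ext rfl]
  exact fR_mku

lemma ΦZ_lam (hc : HC H) : ΦZ hc ⟨Mlam, hlam_mem hc⟩ = 1 := by
  show fR ⟨π Mlam, _⟩ = 1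
  rw [show (⟨π Mlam, hR hc ⟨Mlam, hlam_mem hc⟩⟩ : ↥RR) = ⟨lk, hlkR⟩ from Subtype.ext rfl]
  exact fR_lk

noncomputable def Φm (hc : HC H) : ↥H →* Multiplicative (ℤ × ZMod 4) :=
  MonoidHom.mk'
    (fun h => Multiplicative.ofAdd ((Multiplicative.toAdd (ΦZ hc h), gfun h.1) : ℤ × ZMod 4))
    (by
      intro x y
      have hg : gfun ((x*y : ↥H) : SL2) = gfun x.1 + gfun y.1 := gfun_mul hc x.2 y.2
      show Multiplicative.ofAdd ((Multiplicative.toAdd (ΦZ hc (x*y)), gfun ((x*y : ↥H) : SL2)) : ℤ × ZMod 4) = _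
      rw [_root_.map_mul (ΦZ hc) x y, hg]
      rfl)

lemma gfun_Mmu : gfun Mmu = 0 := by
  rw [gfun, if_pos]
  · norm_num [Mmu]
  · show Even ((Mmu : Matrix (Fin 2) (Fin 2) ℤ) 1 0)
    norm_num [Mmu]

lemma gfun_Mlam : gfun Mlam = 1 := by
  rw [gfun, if_neg]
  · norm_num [Mlam]
  · show ¬ Even ((Mlam : Matrix (Fin 2) (Fin 2) ℤ) 1 0)
    norm_num [Mlam]

lemma Φm_mu (hc : HC H) :
    Φm hc ⟨Mmu, hmu_mem hc⟩ = Multiplicative.ofAdd ((1, 0) : ℤ × ZMod 4) := by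
  show Multiplicative.ofAdd ((Multiplicative.toAdd (ΦZ hc ⟨Mmu, hmu_mem hc⟩), gfun Mmu) : ℤ × ZMod 4) = _
  rw [ΦZ_mu hc, gfun_Mmu]
  rfl

lemma Φm_lam (hc : HC H) :
    Φm hc ⟨Mlam, hlam_mem hc⟩ = Multiplicative.ofAdd ((0, 1) : ℤ × ZMod 4) := by
  show Multiplicative.ofAdd ((Multiplicative.toAdd (ΦZ hc ⟨Mlam, hlam_mem hc⟩), gfun Mlam) : ℤ × ZMod 4) = _
  rw [ΦZ_lam hc, gfun_Mlam]
  rfl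

lemma genH (hc : HC H) (x : ↥H) :
    x ∈ Subgroup.closure ({⟨Mlam, hlam_mem hc⟩, ⟨Mmu, hmu_mem hc⟩} : Set ↥H) := by
  have himg : Subgroup.map H.subtype
      (Subgroup.closure ({⟨Mlam, hlam_mem hc⟩, ⟨Mmu, hmu_mem hc⟩} : Set ↥H))
      = Subgroup.closure {Mlam, Mmu} := by
    rw [MonoidHom.map_closure]
    congr 1
    rw [Set.image_insert_eq, Set.image_singleton]
    rfl
  have hx : x.1 ∈ Subgroup.map H.subtype
      (Subgroup.closure ({⟨Mlam, hlam_mem hc⟩, ⟨Mmu, hmu_mem hc⟩} : Set ↥H)) := by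
    rw [himg]
    exact gen hc x.2
  obtain ⟨y, hy, hyx⟩ := Subgroup.mem_map.mp hx
  have hxy : y = x := Subtype.ext hyx
  rwa [← hxy]

set_option maxHeartbeats 1000000 in
lemma main (hc : HC H) :
    ∃ (e : Abelianization ↥H ≃* Multiplicative (ℤ × ZMod 4)),
      e (Abelianization.of ⟨Mmu, hmu_mem hc⟩) = Multiplicative.ofAdd ((1, 0) : ℤ × ZMod 4) ∧
      e (Abelianization.of ⟨Mlam, hlam_mem hc⟩) = Multiplicative.ofAdd ((0, 1) : ℤ × ZMod 4) := by
  classical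
  set amu : Abelianization ↥H := Abelianization.of ⟨Mmu, hmu_mem hc⟩ with hamu
  set alam : Abelianization ↥H := Abelianization.of ⟨Mlam, hlam_mem hc⟩ with halam
  have hlam4 : (⟨Mlam, hlam_mem hc⟩ : ↥H)^4 = 1 := by
    rw [← OneMemClass.coe_eq_one, SubmonoidClass.coe_pow]
    exact Mlam_pow4
  have alam4 : alam^4 = 1 := by
    rw [halam, ← _root_.map_pow, hlam4, _root_.map_one]
  set Φ := Φm hc with hΦ
  set ΦA := Abelianization.lift Φ with hΦA
  have pow_mod : ∀ (m : ℕ), alam ^ (m % 4) = alam ^ m := fun m => (pow_eq_pow_mod m alam4).symm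
  have hpsi_mul : ∀ x y : Multiplicative (ℤ × ZMod 4),
      (fun x => amu ^ (Multiplicative.toAdd x).1 * alam ^ ((Multiplicative.toAdd x).2.val)) (x*y)
      = (fun x => amu ^ (Multiplicative.toAdd x).1 * alam ^ ((Multiplicative.toAdd x).2.val)) x *
        (fun x => amu ^ (Multiplicative.toAdd x).1 * alam ^ ((Multiplicative.toAdd x).2.val)) y := by
    intro x y
    simp only
    have ht : Multiplicative.toAdd (x*y) = Multiplicative.toAdd x + Multiplicative.toAdd y := rfl
    have h1 : (Multiplicative.toAdd (x*y)).1
        = (Multiplicative.toAdd x).1 + (Multiplicative.toAdd y).1 := rfl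
    have h2 : (Multiplicative.toAdd (x*y)).2
        = (Multiplicative.toAdd x).2 + (Multiplicative.toAdd y).2 := rfl
    rw [h1, h2, ZMod.val_add, pow_mod, pow_add, _root_.zpow_add]
    exact mul_mul_mul_comm _ _ _ _
  set Ψ : Multiplicative (ℤ × ZMod 4) →* Abelianization ↥H :=
    MonoidHom.mk' (fun x => amu ^ (Multiplicative.toAdd x).1 * alam ^ ((Multiplicative.toAdd x).2.val))
      hpsi_mul with hΨ
  have hΨmu : Ψ (Multiplicative.ofAdd ((1, 0) : ℤ × ZMod 4)) = amu := by
    show amu ^ (1:ℤ) * alam ^ ((0 : ZMod 4).val) = amu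
    rw [zpow_one, ZMod.val_zero, pow_zero, mul_one]
  have hΨlam : Ψ (Multiplicative.ofAdd ((0, 1) : ℤ × ZMod 4)) = alam := by
    show amu ^ (0:ℤ) * alam ^ ((1 : ZMod 4).val) = alam
    rw [zpow_zero, one_mul, show (1 : ZMod 4).val = 1 from rfl, pow_one]
  have hA1 : ΦA amu = Multiplicative.ofAdd ((1, 0) : ℤ × ZMod 4) := by
    rw [hamu, hΦA, Abelianization.lift_apply_of]
    exact Φm_mu hc
  have hA2 : ΦA alam = Multiplicative.ofAdd ((0, 1) : ℤ × ZMod 4) := by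
    rw [halam, hΦA, Abelianization.lift_apply_of]
    exact Φm_lam hc
  have h1 : ∀ h : ↥H, Ψ (Φ h) = Abelianization.of h := by
    intro h
    have hgen := genH hc h
    induction hgen using Subgroup.closure_induction with
    | mem w hw =>
      rcases Set.mem_insert_iff.mp hw with rfl | hw
      · rw [hΦ, Φm_lam hc, hΨlam, halam]
      · rw [Set.mem_singleton_iff] at hw
        subst hw
        rw [hΦ, Φm_mu hc, hΨmu, hamu]
    | one => rw [_root_.map_one, _root_.map_one, _root_.map_one]
    | mul a b ha hb iha ihb => rw [_root_.map_mul, _root_.map_mul, iha, ihb, _root_.map_mul]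
    | inv a ha iha => rw [_root_.map_inv, _root_.map_inv, iha, _root_.map_inv]
  have h2 : ∀ x, ΦA (Ψ x) = x := by
    intro x
    have hval : Ψ x = amu ^ (Multiplicative.toAdd x).1 * alam ^ (((Multiplicative.toAdd x).2).val) := rfl
    rw [hval, _root_.map_mul, map_zpow, _root_.map_pow, hA1, hA2,
      ← ofAdd_zsmul, ← ofAdd_nsmul, ← ofAdd_add]
    have hcomp : (Multiplicative.toAdd x).1 • ((1,0) : ℤ × ZMod 4)
        + ((Multiplicative.toAdd x).2).val • ((0,1) : ℤ × ZMod 4)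
        = ((Multiplicative.toAdd x).1, (Multiplicative.toAdd x).2) := by
      rw [Prod.ext_iff]
      constructor
      · show (Multiplicative.toAdd x).1 • (1:ℤ) + ((Multiplicative.toAdd x).2).val • (0:ℤ)
          = (Multiplicative.toAdd x).1
        rw [smul_zero, add_zero, smul_eq_mul, mul_one]
      · show (Multiplicative.toAdd x).1 • (0 : ZMod 4) + ((Multiplicative.toAdd x).2).val • (1 : ZMod 4)
          = (Multiplicative.toAdd x).2
        rw [smul_zero, zero_add, nsmul_eq_mul, mul_one, ZMod.natCast_val, ZMod.cast_id]
    rw [hcomp]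
    rfl
  have hgf : Ψ.comp ΦA = MonoidHom.id _ := by
    apply Abelianization.hom_ext
    apply MonoidHom.ext
    intro h
    show Ψ (ΦA (Abelianization.of h)) = Abelianization.of h
    rw [hΦA, Abelianization.lift_apply_of]
    exact h1 h
  have hfg : ΦA.comp Ψ = MonoidHom.id _ := MonoidHom.ext h2
  refine ⟨MonoidHom.toMulEquiv ΦA Ψ hgf hfg, ?_, ?_⟩
  · show ΦA amu = _
    exact hA1
  · show ΦA alam = _
    exact hA2

end Final

end Stmt10

/-- let `q₀₀` be the quadratic refinement of `(ℤ², Ω₁)` vanishing on both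
standard basis vectors, and let `Sp₂⁰(ℤ) = H` be the subgroup of `SL₂(ℤ)` of all `φ`
stabilizing `q₀₀` under `q ↦ q ∘ φ`.  Then the abelianization of `H` is `ℤ ⊕ ℤ/4`, where a
generator of the `ℤ` summand is represented by `[[1,2],[0,1]]` and a generator of the `ℤ/4`
summand is represented by `[[0,-1],[1,0]]`. -/
theorem stmt_10 (q : (Fin 2 → ℤ) → ZMod 2) (hq : IsQuadRef2 q)
    (he : q ![1, 0] = 0) (hf : q ![0, 1] = 0)
    (H : Subgroup (Matrix.SpecialLinearGroup (Fin 2) ℤ))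
    (hH : ∀ φ : Matrix.SpecialLinearGroup (Fin 2) ℤ,
      φ ∈ H ↔ ∀ x : Fin 2 → ℤ, q ((φ : Matrix (Fin 2) (Fin 2) ℤ).mulVec x) = q x) :
    ∃ (e : Abelianization ↥H ≃* Multiplicative (ℤ × ZMod 4))
      (hmu : Mmu ∈ H) (hlam : Mlam ∈ H),
      e (Abelianization.of ⟨Mmu, hmu⟩) = Multiplicative.ofAdd ((1, 0) : ℤ × ZMod 4) ∧
      e (Abelianization.of ⟨Mlam, hlam⟩) = Multiplicative.ofAdd ((0, 1) : ℤ × ZMod 4) := by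
  have hc := Stmt10.HC_of q hq he hf H hH
  obtain ⟨e, h1, h2⟩ := Stmt10.main hc
  exact ⟨e, Stmt10.hmu_mem hc, Stmt10.hlam_mem hc, h1, h2⟩
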